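/- arXiv:0810.0800 — 6 statements merged into one kernel-verified Lean document; each statement's English description precedes it below -/
import Mathlib

section
/- For real numbers a > 0, b > 0, k > 1/a, and any t ≥ k b/(k a − 1), the tail integral satisfies ∫ₜ^∞ e^{-a x} x^b dx ≤ k e^{-a t} t^b. -/
/-! With `F x = -k e^{-a x} x^b`, the condition `x (k a - 1) ≥ k b` for `x ≥ t` says exactly that
the integrand is at most `F'`; since `F → 0` at infinity, the integral over `[t, ∞)` is at most
`-F t = k e^{-a t} t^b`. -/

open MeasureTheory Set Filter Real Topology

theorem integral_Ioi_le_of_hasDerivAt_of_le {f F F' : ℝ → ℝ} {t m : ℝ}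
    (hF : ∀ x ∈ Ici t, HasDerivAt F (F' x) x) (hf : ∀ x ∈ Ioi t, 0 ≤ f x)
    (hfF' : ∀ x ∈ Ioi t, f x ≤ F' x) (hlim : Tendsto F atTop (𝓝 m)) :
    ∫ x in Ioi t, f x ≤ m - F t := by
  have hF'_nonneg : ∀ x ∈ Ioi t, 0 ≤ F' x := fun x hx => (hf x hx).trans (hfF' x hx)
  rw [← integral_Ioi_of_hasDerivAt_of_nonneg' hF hF'_nonneg hlim]
  exact integral_mono_of_nonneg (ae_restrict_of_forall_mem measurableSet_Ioi hf)
    (integrableOn_Ioi_deriv_of_nonneg' hF hF'_nonneg hlim)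
    (ae_restrict_of_forall_mem measurableSet_Ioi hfF')

theorem hasDerivAt_exp_neg_mul_mul_rpow {a b x : ℝ} (hx : x ≠ 0) :
    HasDerivAt (fun y => exp (-a * y) * y ^ b)
      (exp (-a * x) * (b * x ^ (b - 1) - a * x ^ b)) x := by
  have hexp : HasDerivAt (fun y => exp (-a * y)) (exp (-a * x) * -a) x := by
    simpa using ((hasDerivAt_id x).const_mul (-a)).exp
  exact (hexp.mul (hasDerivAt_rpow_const (Or.inl hx))).congr_deriv (by ring)

theorem exp_neg_mul_mul_rpow_le_neg_const_mul_deriv {a b k x : ℝ} (hx : 0 < x)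
    (h : k * b ≤ x * (k * a - 1)) :
    exp (-a * x) * x ^ b ≤ -(k * (exp (-a * x) * (b * x ^ (b - 1) - a * x ^ b))) := by
  have hsplit : x ^ b = x * x ^ (b - 1) := by
    rw [rpow_sub_one hx.ne']; field_simp
  have hrpow : x ^ b ≤ k * (a * x ^ b - b * x ^ (b - 1)) := by
    have hpow : 0 ≤ x ^ (b - 1) := rpow_nonneg hx.le _
    rw [hsplit]
    nlinarith
  calc exp (-a * x) * x ^ b ≤ exp (-a * x) * (k * (a * x ^ b - b * x ^ (b - 1))) := by gcongr
    _ = _ := by ring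

theorem tail_integral_bound (a b k t : ℝ) (ha : 0 < a) (hb : 0 < b)
    (hk : 1 / a < k) (ht : k * b / (k * a - 1) ≤ t) :
    ∫ x in Set.Ici t, Real.exp (-a * x) * x ^ b ≤ k * Real.exp (-a * t) * t ^ b := by
  have hka : 0 < k * a - 1 := by rw [div_lt_iff₀ ha] at hk; linarith
  have hk0 : 0 < k := lt_trans (by positivity) hk
  have ht0 : 0 < t := lt_of_lt_of_le (by positivity) ht
  have hkbt : k * b ≤ t * (k * a - 1) := (div_le_iff₀ hka).1 ht
  have hlim : Tendsto (fun x => -(k * (exp (-a * x) * x ^ b))) atTop (𝓝 0) := by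
    simpa [mul_comm] using ((tendsto_rpow_mul_exp_neg_mul_atTop_nhds_zero b a ha).const_mul k).neg
  have hbound := integral_Ioi_le_of_hasDerivAt_of_le
    (fun x hx => ((hasDerivAt_exp_neg_mul_mul_rpow (ht0.trans_le hx).ne').const_mul k).neg)
    (fun x hx => by have := ht0.trans hx; positivity)
    (fun x hx => exp_neg_mul_mul_rpow_le_neg_const_mul_deriv (ht0.trans hx)
      (hkbt.trans (by gcongr; exact hx.out.le)))
    hlim
  rw [integral_Ici_eq_integral_Ioi]
  simpa [mul_assoc] using hbound
end

section
/- For every real x > 0, √(2π) · x^{x+1/2} · e^{-x} < Γ(x+1) < √(2π) · x^{x+1/2} · e^{-x + 1/(12x)}. -/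
/-!
Write `log Γ(x + 1) = log √(2π) + (x + 1/2) log x - x + μ(x)`, with `μ = stirlingDefect`.
The increment `μ(y) - μ(y + 1) = (y + 1/2) log (1 + 1/y) - 1` expands, with `t = 1/(2y + 1)`,
into the positive series `∑_{k ≥ 1} t^(2k) / (2k + 1)`, which is dominated termwise by
`∑_{k ≥ 1} t^(2k) / 3 = 1/(12y) - 1/(12(y + 1))`. Since `μ(x + n) → 0` (Stirling's formula for
`n!` together with the Gauss limit for `Γ`), `μ(x)` is the telescoping sum of its increments,
hence lies strictly between `0` and `1/(12x)`.
-/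

open Real Filter Topology

theorem hasSum_sub_succ_of_antitone {f : ℕ → ℝ} {l : ℝ} (hf : Antitone f)
    (hl : Tendsto f atTop (𝓝 l)) : HasSum (fun n => f n - f (n + 1)) (f 0 - l) := by
  rw [hasSum_iff_tendsto_nat_of_nonneg (fun n => sub_nonneg.2 (hf n.le_succ))]
  simpa only [Finset.sum_range_sub'] using tendsto_const_nhds.sub hl

theorem Real.log_Gamma_add_one {y : ℝ} (hy : 0 < y) :
    log (Gamma (y + 1)) = log (Gamma y) + log y := by
  rw [Gamma_add_one hy.ne', log_mul hy.ne' (Gamma_pos_of_pos hy).ne', add_comm]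

theorem Real.tendsto_log_Gamma_add_nat_sub {x : ℝ} (hx : 0 < x) :
    Tendsto (fun n : ℕ => log (Gamma (x + n + 1)) - log (Gamma (n + 1)) - x * log n)
      atTop (𝓝 0) := by
  have hseq := (BohrMollerup.tendsto_log_gamma hx).const_sub (log (Gamma x))
  rw [sub_self] at hseq
  refine hseq.congr fun n => ?_
  have hsum := BohrMollerup.f_add_nat_eq (f := log ∘ Gamma) (log_Gamma_add_one ·) hx (n + 1)
  simp only [Function.comp_apply] at hsum
  rw [BohrMollerup.logGammaSeq, Gamma_nat_eq_factorial, add_assoc, ← Nat.cast_add_one, hsum]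
  ring

noncomputable def stirlingDefect (x : ℝ) : ℝ :=
  log (Gamma (x + 1)) - (x + 1 / 2) * log x + x - log √(2 * π)

theorem Gamma_add_one_eq_stirling {x : ℝ} (hx : 0 < x) :
    Gamma (x + 1) = √(2 * π) * x ^ (x + 1 / 2) * exp (-x + stirlingDefect x) := by
  have hG : 0 < Gamma (x + 1) := Gamma_pos_of_pos (by linarith)
  rw [rpow_def_of_pos hx, ← exp_log hG, ← exp_log (by positivity : 0 < √(2 * π)), ← exp_add,
    ← exp_add, stirlingDefect]
  congr 1
  ring

theorem stirlingDefect_sub_succ_eq {y : ℝ} (hy : 0 < y) :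
    stirlingDefect y - stirlingDefect (y + 1) = (y + 1 / 2) * log (1 + y⁻¹) - 1 := by
  have hlog : log (1 + y⁻¹) = log (y + 1) - log y := by
    rw [← log_div (by positivity) hy.ne', add_div, div_self hy.ne', one_div]
  rw [stirlingDefect, stirlingDefect, log_Gamma_add_one (by positivity : 0 < y + 1), hlog]
  ring

theorem hasSum_stirlingDefect_sub_succ {y : ℝ} (hy : 0 < y) :
    HasSum (fun k : ℕ => ((1 / (2 * y + 1)) ^ 2) ^ (k + 1) / (2 * k + 3))
      (stirlingDefect y - stirlingDefect (y + 1)) := by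
  have h := (hasSum_log_one_add_inv hy).mul_left (y + 1 / 2)
  rw [← hasSum_nat_add_iff' 1, Finset.sum_range_one] at h
  have h2y : 2 * y + 1 ≠ 0 := by positivity
  have hterm (k : ℕ) : ((1 / (2 * y + 1)) ^ 2) ^ (k + 1) / (2 * k + 3) =
      (y + 1 / 2) *
        (2 * (1 / (2 * ((k + 1 : ℕ) : ℝ) + 1)) * (1 / (2 * y + 1)) ^ (2 * (k + 1) + 1)) := by
    rw [← pow_mul, pow_succ _ (2 * (k + 1))]
    push_cast
    field_simp
    ring
  have hfirst : (y + 1 / 2) * (2 * (1 / (2 * ((0 : ℕ) : ℝ) + 1)) * (1 / (2 * y + 1)) ^ (2 * 0 + 1))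
      = 1 := by
    norm_num
    field_simp
  rw [hfirst, ← stirlingDefect_sub_succ_eq hy] at h
  rwa [funext hterm]

theorem stirlingDefect_sub_succ_pos {y : ℝ} (hy : 0 < y) :
    0 < stirlingDefect y - stirlingDefect (y + 1) :=
  hasSum_lt (f := 0) (i := 0) (fun k => by positivity) (by positivity) hasSum_zero
    (hasSum_stirlingDefect_sub_succ hy)

theorem stirlingDefect_sub_succ_lt {y : ℝ} (hy : 0 < y) :
    stirlingDefect y - stirlingDefect (y + 1) < 1 / (12 * y) - 1 / (12 * (y + 1)) := by
  have hser := hasSum_stirlingDefect_sub_succ hy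
  set r : ℝ := (1 / (2 * y + 1)) ^ 2 with hr
  clear_value r
  have hr0 : 0 < r := by rw [hr]; positivity
  have hr1 : r < 1 := by
    rw [hr, div_pow, one_pow, div_lt_one (by positivity)]
    nlinarith
  have hgeom : HasSum (fun k : ℕ => r ^ (k + 1) / 3) (1 / (12 * y) - 1 / (12 * (y + 1))) := by
    have h := ((hasSum_geometric_of_lt_one hr0.le hr1).mul_left r).div_const 3
    have h1r : 1 - r = 4 * y * (y + 1) / (2 * y + 1) ^ 2 := by
      rw [hr]
      field_simp
      ring
    have hval : r * (1 - r)⁻¹ / 3 = 1 / (12 * y) - 1 / (12 * (y + 1)) := by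
      rw [h1r, hr]
      field_simp
      ring
    simpa only [← pow_succ', hval] using h
  refine hasSum_lt (i := 1) (fun k => ?_) ?_ hser hgeom
  · exact div_le_div_of_nonneg_left (by positivity) (by norm_num)
      (by linarith [k.cast_nonneg (α := ℝ)])
  · have hr2 : 0 < r ^ 2 := by positivity
    norm_num
    linarith

theorem tendsto_stirlingDefect_natCast :
    Tendsto (fun n : ℕ => stirlingDefect n) atTop (𝓝 0) := by
  have h := (Stirling.tendsto_stirlingSeq_sqrt_pi.log (by positivity)).sub_const (log √π)
  rw [sub_self] at h
  refine h.congr' ?_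
  filter_upwards [eventually_ne_atTop 0] with n hn
  have hn0 : (0 : ℝ) < n := by positivity
  rw [Stirling.log_stirlingSeq_formula, stirlingDefect, Gamma_nat_eq_factorial,
    log_mul two_ne_zero hn0.ne', log_div hn0.ne' (exp_pos 1).ne', log_exp,
    log_sqrt pi_pos.le, log_sqrt (by positivity), log_mul two_ne_zero pi_pos.ne']
  ring

theorem tendsto_stirlingDefect_add_nat {x : ℝ} (hx : 0 < x) :
    Tendsto (fun n : ℕ => stirlingDefect (x + n)) atTop (𝓝 0) := by
  have hlog : Tendsto (fun n : ℕ => (x + 1 / 2) * log (1 + x / n)) atTop (𝓝 0) := by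
    have h : Tendsto (fun n : ℕ => 1 + x / n) atTop (𝓝 1) := by
      simpa using (tendsto_const_div_atTop_nhds_zero_nat x).const_add 1
    simpa using (h.log one_ne_zero).const_mul (x + 1 / 2)
  have hmul := (tendsto_mul_log_one_add_div_atTop x).comp tendsto_natCast_atTop_atTop
  have h := (((tendsto_log_Gamma_add_nat_sub hx).sub (hmul.add hlog)).add_const x).add
    tendsto_stirlingDefect_natCast
  rw [show (0 : ℝ) - (x + 0) + x + 0 = 0 by ring] at h
  refine h.congr' ?_
  filter_upwards [eventually_ne_atTop 0] with n hn
  have hn0 : (0 : ℝ) < n := by positivity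
  have hlog1 : log (1 + x / n) = log (x + n) - log n := by
    rw [← log_div (by positivity) hn0.ne']
    congr 1
    field_simp
    ring
  simp only [Function.comp_apply, hlog1, stirlingDefect]
  ring

theorem hasSum_stirlingDefect {x : ℝ} (hx : 0 < x) :
    HasSum (fun n : ℕ => stirlingDefect (x + n) - stirlingDefect (x + n + 1))
      (stirlingDefect x) := by
  have hanti : Antitone fun n : ℕ => stirlingDefect (x + n) :=
    antitone_nat_of_succ_le fun n => by
      have := stirlingDefect_sub_succ_pos (by positivity : 0 < x + n)
      rw [Nat.cast_succ, ← add_assoc]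
      linarith
  simpa [add_assoc] using hasSum_sub_succ_of_antitone hanti (tendsto_stirlingDefect_add_nat hx)

theorem stirlingDefect_pos {x : ℝ} (hx : 0 < x) : 0 < stirlingDefect x :=
  hasSum_lt (f := 0) (i := (0 : ℕ))
    (fun n => (stirlingDefect_sub_succ_pos (by positivity : 0 < x + n)).le)
    (stirlingDefect_sub_succ_pos (by simpa using hx)) hasSum_zero (hasSum_stirlingDefect hx)

theorem stirlingDefect_lt {x : ℝ} (hx : 0 < x) : stirlingDefect x < 1 / (12 * x) := by
  have hanti : Antitone fun n : ℕ => 1 / (12 * (x + n)) :=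
    antitone_nat_of_succ_le fun n => by gcongr; simp
  have hlim : Tendsto (fun n : ℕ => 1 / (12 * (x + n))) atTop (𝓝 0) :=
    tendsto_const_nhds.div_atTop
      ((tendsto_atTop_add_const_left _ x tendsto_natCast_atTop_atTop).const_mul_atTop (by norm_num))
  have htel := hasSum_sub_succ_of_antitone hanti hlim
  simp only [Nat.cast_zero, add_zero, sub_zero, Nat.cast_succ, ← add_assoc] at htel
  exact hasSum_lt (i := (0 : ℕ))
    (fun n => (stirlingDefect_sub_succ_lt (by positivity : 0 < x + n)).le)
    (stirlingDefect_sub_succ_lt (by simpa using hx)) (hasSum_stirlingDefect hx) htel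

theorem stirling_bounds (x : ℝ) (hx : 0 < x) :
    Real.sqrt (2 * Real.pi) * x ^ (x + 1/2) * Real.exp (-x) < Real.Gamma (x + 1) ∧
    Real.Gamma (x + 1) < Real.sqrt (2 * Real.pi) * x ^ (x + 1/2) * Real.exp (-x + 1/(12*x)) := by
  rw [Gamma_add_one_eq_stirling hx]
  constructor
  · gcongr
    linarith [stirlingDefect_pos hx]
  · gcongr
    exact stirlingDefect_lt hx
end

section
/- For every real x > 0, Γ(x + 1/2) < Γ(x) · √x. -/
/-!
Log-convexity of `Γ` between `y` and `y + 1` gives only the weak bound `Γ(y + 1/2) ≤ Γ(y) √y`.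
Strictness comes from applying it at `y = x + 1` instead: pulled back with `Γ(s + 1) = s Γ(s)`, this becomes
`(x + 1/2) Γ(x + 1/2) ≤ x √(x + 1) Γ(x)`, and `x √(x + 1) < (x + 1/2) √x` since
`x² (x + 1) < x (x + 1/2)²`.
-/

open Real

namespace Real

theorem Gamma_add_le_Gamma_mul_rpow {y a : ℝ} (hy : 0 < y) (ha₀ : 0 < a) (ha₁ : a < 1) :
    Gamma (y + a) ≤ Gamma y * y ^ a := by
  have hΓ : 0 < Gamma y := Gamma_pos_of_pos hy
  have hconv := Gamma_mul_add_mul_le_rpow_Gamma_mul_rpow_Gamma (s := y) (t := y + 1)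
    hy (by linarith) (sub_pos.mpr ha₁) ha₀ (sub_add_cancel 1 a)
  calc Gamma (y + a) = Gamma ((1 - a) * y + a * (y + 1)) := by ring_nf
    _ ≤ Gamma y ^ (1 - a) * Gamma (y + 1) ^ a := hconv
    _ = Gamma y * y ^ a := by
      rw [Gamma_add_one hy.ne', mul_rpow hy.le hΓ.le, mul_left_comm, ← rpow_add hΓ,
        sub_add_cancel, rpow_one, mul_comm]

theorem mul_sqrt_add_one_lt_sqrt_mul_add_half {x : ℝ} (hx : 0 < x) :
    x * √(x + 1) < √x * (x + 1 / 2) := by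
  have hhalf : 0 ≤ x + 1 / 2 := by linarith
  rw [show x * √(x + 1) = √(x ^ 2 * (x + 1)) by rw [sqrt_mul (sq_nonneg x), sqrt_sq hx.le],
    show √x * (x + 1 / 2) = √(x * (x + 1 / 2) ^ 2) by rw [sqrt_mul hx.le, sqrt_sq hhalf]]
  exact sqrt_lt_sqrt (by positivity) (by nlinarith)

end Real

theorem gamma_half_shift_lt (x : ℝ) (hx : 0 < x) :
    Real.Gamma (x + 1/2) < Real.Gamma x * Real.sqrt x := by
  have hΓ : 0 < Gamma x := Gamma_pos_of_pos hx
  have hshift : (x + 1 / 2) * Gamma (x + 1 / 2) ≤ x * Gamma x * √(x + 1) := by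
    have h := Gamma_add_le_Gamma_mul_rpow (by linarith : 0 < x + 1) one_half_pos one_half_lt_one
    rwa [show x + 1 + 1 / 2 = (x + 1 / 2) + 1 by ring, Gamma_add_one (by linarith),
      Gamma_add_one hx.ne', ← sqrt_eq_rpow] at h
  have hlt : (x + 1 / 2) * Gamma (x + 1 / 2) < (x + 1 / 2) * (Gamma x * √x) :=
    calc (x + 1 / 2) * Gamma (x + 1 / 2) ≤ x * Gamma x * √(x + 1) := hshift
      _ = Gamma x * (x * √(x + 1)) := by ring
      _ < Gamma x * (√x * (x + 1 / 2)) :=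
        mul_lt_mul_of_pos_left (mul_sqrt_add_one_lt_sqrt_mul_add_half hx) hΓ
      _ = (x + 1 / 2) * (Gamma x * √x) := by ring
  exact lt_of_mul_lt_mul_left hlt (by linarith)
end

section
/- For all integers n ≥ m ≥ 2, one has Γ(m/2) · (n/2)^{(n−m+1)/2} > Γ((n+1)/2). -/
open Real

lemma gamma_step_le {x : ℝ} (hx : 0 < x) :
    Real.Gamma (x + 1/2) ≤ Real.Gamma x * x ^ ((1:ℝ)/2) := by
  have h := Real.Gamma_mul_add_mul_le_rpow_Gamma_mul_rpow_Gamma hx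
    (by linarith : (0:ℝ) < x + 1) (by norm_num : (0:ℝ) < 1/2) (by norm_num : (0:ℝ) < 1/2)
    (by norm_num : (1:ℝ)/2 + 1/2 = 1)
  have hmid : (1/2 : ℝ) * x + (1/2 : ℝ) * (x+1) = x + 1/2 := by ring
  rw [hmid, Real.Gamma_add_one hx.ne'] at h
  have hΓ := Real.Gamma_pos_of_pos hx
  rw [Real.mul_rpow hx.le hΓ.le] at h
  calc Real.Gamma (x + 1/2) ≤ Real.Gamma x ^ ((1:ℝ)/2) * (x ^ ((1:ℝ)/2) * Real.Gamma x ^ ((1:ℝ)/2)) := h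
    _ = (Real.Gamma x ^ ((1:ℝ)/2) * Real.Gamma x ^ ((1:ℝ)/2)) * x ^ ((1:ℝ)/2) := by ring
    _ = Real.Gamma x * x ^ ((1:ℝ)/2) := by
        rw [← Real.rpow_add hΓ]; norm_num

lemma gamma_step_lt {x : ℝ} (hx : 0 < x) :
    Real.Gamma (x + 1/2) < Real.Gamma x * x ^ ((1:ℝ)/2) := by
  have hΓ := Real.Gamma_pos_of_pos hx
  have h := gamma_step_le (by linarith : (0:ℝ) < x + 1)
  have he : x + 1 + 1/2 = (x + 1/2) + 1 := by ring
  rw [he, Real.Gamma_add_one (by positivity : x + 1/2 ≠ 0),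
    Real.Gamma_add_one hx.ne'] at h
  -- h : (x + 1/2) * Gamma (x + 1/2) ≤ x * Gamma x * (x+1) ^ (1/2)
  have hs1 : (x+1) ^ ((1:ℝ)/2) = Real.sqrt (x+1) := (Real.sqrt_eq_rpow _).symm
  have hs2 : x ^ ((1:ℝ)/2) = Real.sqrt x := (Real.sqrt_eq_rpow _).symm
  rw [hs1] at h
  rw [hs2]
  have key : x * Real.sqrt (x+1) < Real.sqrt x * (x + 1/2) := by
    have e1 : x * Real.sqrt (x+1) = Real.sqrt (x^2 * (x+1)) := by
      rw [Real.sqrt_mul (by positivity), Real.sqrt_sq hx.le]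
    have e2 : Real.sqrt x * (x + 1/2) = Real.sqrt (x * (x+1/2)^2) := by
      rw [Real.sqrt_mul hx.le, Real.sqrt_sq (by linarith)]
    rw [e1, e2]
    apply Real.sqrt_lt_sqrt (by positivity)
    nlinarith
  have h2 : (x + 1/2) * Real.Gamma (x + 1/2) < (x + 1/2) * (Real.Gamma x * Real.sqrt x) := by
    calc (x + 1/2) * Real.Gamma (x + 1/2) ≤ x * Real.Gamma x * Real.sqrt (x+1) := h
      _ = Real.Gamma x * (x * Real.sqrt (x+1)) := by ring
      _ < Real.Gamma x * (Real.sqrt x * (x + 1/2)) := by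
          exact (mul_lt_mul_iff_right₀ hΓ).mpr key
      _ = (x + 1/2) * (Real.Gamma x * Real.sqrt x) := by ring
  exact lt_of_mul_lt_mul_left h2 (by linarith)

theorem gamma_ratio_gt (m n : ℕ) (hm : 2 ≤ m) (hmn : m ≤ n) :
    Real.Gamma ((m : ℝ) / 2) * ((n : ℝ) / 2) ^ (((n : ℝ) - m + 1) / 2) >
      Real.Gamma (((n : ℝ) + 1) / 2) := by
  have hm0 : (0:ℝ) < (m:ℝ) / 2 := by
    have : (2:ℝ) ≤ m := by exact_mod_cast hm
    linarith
  induction n, hmn using Nat.le_induction with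
  | base =>
    have h := gamma_step_lt hm0
    have he : ((m:ℝ) - m + 1) / 2 = (1:ℝ)/2 := by ring
    have he2 : ((m:ℝ) + 1) / 2 = (m:ℝ)/2 + 1/2 := by ring
    rw [he, he2]
    exact h
  | succ n hn ih =>
    have hm2 : (2:ℝ) ≤ (m:ℝ) := by exact_mod_cast hm
    have hmn' : (m:ℝ) ≤ n := by exact_mod_cast hn
    push_cast
    have hnp : (0:ℝ) < (n:ℝ)/2 := by linarith
    have hnp1 : (0:ℝ) < ((n:ℝ)+1)/2 := by linarith
    have step := gamma_step_lt hnp1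
    have he2 : ((n:ℝ) + 1 + 1) / 2 = ((n:ℝ)+1)/2 + 1/2 := by ring
    rw [he2]
    have hexp : (0:ℝ) ≤ ((n:ℝ) - m + 1) / 2 := by linarith
    have hΓm := Real.Gamma_pos_of_pos hm0
    calc Real.Gamma (((n:ℝ)+1)/2 + 1/2)
        < Real.Gamma (((n:ℝ)+1)/2) * (((n:ℝ)+1)/2) ^ ((1:ℝ)/2) := step
      _ < Real.Gamma ((m:ℝ)/2) * ((n:ℝ)/2) ^ (((n:ℝ) - m + 1)/2) * (((n:ℝ)+1)/2) ^ ((1:ℝ)/2) :=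
          mul_lt_mul_of_pos_right ih (by positivity)
      _ ≤ Real.Gamma ((m:ℝ)/2) * (((n:ℝ)+1)/2) ^ (((n:ℝ) - m + 1)/2) * (((n:ℝ)+1)/2) ^ ((1:ℝ)/2) := by
          apply mul_le_mul_of_nonneg_right _ (by positivity)
          exact mul_le_mul_of_nonneg_left
            (Real.rpow_le_rpow hnp.le (by linarith) hexp) hΓm.le
      _ = Real.Gamma ((m:ℝ)/2) * (((n:ℝ)+1)/2) ^ (((n:ℝ) + 1 - m + 1)/2) := by
          rw [mul_assoc, ← Real.rpow_add hnp1]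
          ring_nf
end

section
/- For all integers n ≥ m ≥ 2, Γ((n+1)/2) / (Γ(m/2) · (n/2)^{(n−m+1)/2}) > √(2 e^{5/6} / 3) · e^{−(n−m+1)/2}. -/
/-!
With `a = m/2` and `y = n/2` the claim reads `normalizedGammaRatio a y > √(2e^{5/6}/3)`.
Log-convexity of `Γ` gives Gautschi's inequality `√y Γ(y + 1/2) ≤ Γ(y + 1)`; combined with
`(1 + 1/(2y))^s ≤ e^{1/2}` for `s ≤ y`, it shows that `normalizedGammaRatio a y` does not decrease
when `y` grows by `1/2`. So it suffices to bound `normalizedGammaRatio a a`: for `a = 1` it is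
computed from `Γ(3/2) = √π/2`, and for `a ≥ 3/2` Gautschi's inequality bounds its square below by
`2e/3 > 2e^{5/6}/3`.
-/

open Real

namespace Real

theorem mul_Gamma_add_half_sq_le_Gamma_add_one_sq {x : ℝ} (hx : 0 < x) :
    x * Gamma (x + 1/2) ^ 2 ≤ Gamma (x + 1) ^ 2 := by
  have hGx := Gamma_pos_of_pos hx
  have hGx1 := Gamma_pos_of_pos (by linarith : 0 < x + 1)
  have hlogConvex : Gamma (x + 1/2) ^ 2 ≤ Gamma x * Gamma (x + 1) := by
    have := Gamma_mul_add_mul_le_rpow_Gamma_mul_rpow_Gamma hx (by linarith : 0 < x + 1)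
      (by norm_num : (0:ℝ) < 1/2) (by norm_num : (0:ℝ) < 1/2) (by norm_num)
    rwa [show 1/2 * x + 1/2 * (x + 1) = x + 1/2 by ring, ← mul_rpow hGx.le hGx1.le,
      ← sqrt_eq_rpow, le_sqrt (Gamma_pos_of_pos (by linarith)).le (by positivity)] at this
  calc x * Gamma (x + 1/2) ^ 2 ≤ x * (Gamma x * Gamma (x + 1)) := by gcongr
    _ = Gamma (x + 1) ^ 2 := by rw [Gamma_add_one hx.ne']; ring

theorem sqrt_mul_Gamma_add_half_le_Gamma_add_one {x : ℝ} (hx : 0 < x) :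
    √x * Gamma (x + 1/2) ≤ Gamma (x + 1) := by
  rw [← pow_le_pow_iff_left₀ (by positivity) (Gamma_pos_of_pos (by linarith)).le two_ne_zero,
    mul_pow, sq_sqrt hx.le]
  exact mul_Gamma_add_half_sq_le_Gamma_add_one_sq hx

end Real

theorem add_rpow_le_rpow_mul_exp {x h s : ℝ} (hx : 0 < x) (hxh : 0 ≤ x + h) (hs : 0 ≤ s) :
    (x + h) ^ s ≤ x ^ s * exp (s * h / x) :=
  calc (x + h) ^ s ≤ (x * exp (h / x)) ^ s := by
        gcongr
        calc x + h = x * (h / x + 1) := by field_simp; ring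
          _ ≤ x * exp (h / x) := by gcongr; exact add_one_le_exp _
    _ = x ^ s * exp (s * h / x) := by
        rw [mul_rpow hx.le (exp_pos _).le, ← exp_mul, mul_div_assoc, mul_comm s]

noncomputable def normalizedGammaRatio (a y : ℝ) : ℝ :=
  Gamma (y + 1/2) * exp (y - a + 1/2) / (Gamma a * y ^ (y - a + 1/2))

theorem normalizedGammaRatio_le_add_half {a y : ℝ} (ha : 1 ≤ a) (hy : 0 < y) (hay : a ≤ y + 1) :
    normalizedGammaRatio a y ≤ normalizedGammaRatio a (y + 1/2) := by
  unfold normalizedGammaRatio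
  rw [show y + 1/2 + 1/2 = y + 1 by ring, show y + 1/2 - a + 1/2 = y - a + 1/2 + 1/2 by ring]
  set e := y - a + 1/2 with he
  have hGa := Gamma_pos_of_pos (by linarith : 0 < a)
  have hpow : (y + 1/2) ^ (e + 1/2) ≤ y ^ e * √y * exp (1/2) :=
    calc (y + 1/2) ^ (e + 1/2) ≤ y ^ (e + 1/2) * exp ((e + 1/2) * (1/2) / y) :=
          add_rpow_le_rpow_mul_exp hy (by linarith) (by linarith)
      _ ≤ y ^ (e + 1/2) * exp (1/2) := by
          gcongr y ^ (e + 1/2) * exp ?_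
          rw [div_le_iff₀ hy]
          linarith
      _ = y ^ e * √y * exp (1/2) := by rw [rpow_add hy, sqrt_eq_rpow]
  clear_value e
  calc Gamma (y + 1/2) * exp e / (Gamma a * y ^ e)
      = √y * Gamma (y + 1/2) * exp (e + 1/2) / (Gamma a * (y ^ e * √y * exp (1/2))) := by
        rw [exp_add]
        field_simp
    _ ≤ Gamma (y + 1) * exp (e + 1/2) / (Gamma a * (y + 1/2) ^ (e + 1/2)) := by
        gcongr
        exact sqrt_mul_Gamma_add_half_le_Gamma_add_one hy

theorem two_thirds_mul_Gamma_half_sq_le (m : ℕ) (hm : 2 ≤ m) :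
    2/3 * ((m : ℝ) / 2) * Gamma ((m : ℝ) / 2) ^ 2 ≤ Gamma ((m : ℝ) / 2 + 1/2) ^ 2 := by
  rcases hm.eq_or_lt with rfl | hm3
  · rw [show ((2 : ℕ) : ℝ) / 2 + 1/2 = 1/2 + 1 by norm_num, Gamma_add_one (by norm_num),
      Gamma_one_half_eq, show ((2 : ℕ) : ℝ) / 2 = 1 by norm_num, Gamma_one, mul_pow,
      sq_sqrt pi_pos.le]
    linarith [pi_gt_three]
  · have hm3 : (3 : ℝ) ≤ m := by exact_mod_cast hm3
    have := mul_Gamma_add_half_sq_le_Gamma_add_one_sq (x := (m : ℝ) / 2 - 1/2) (by linarith)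
    rw [show (m : ℝ) / 2 - 1/2 + 1/2 = m / 2 by ring,
      show (m : ℝ) / 2 - 1/2 + 1 = m / 2 + 1/2 by ring] at this
    calc 2/3 * ((m : ℝ) / 2) * Gamma ((m : ℝ) / 2) ^ 2
        ≤ ((m : ℝ) / 2 - 1/2) * Gamma ((m : ℝ) / 2) ^ 2 := by gcongr; linarith
      _ ≤ Gamma ((m : ℝ) / 2 + 1/2) ^ 2 := this

theorem sqrt_lt_normalizedGammaRatio_self (m : ℕ) (hm : 2 ≤ m) :
    √(2 * exp (5/6) / 3) < normalizedGammaRatio (m / 2) (m / 2) := by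
  have hm2 : (2 : ℝ) ≤ m := by exact_mod_cast hm
  have hGa := Gamma_pos_of_pos (by linarith : (0 : ℝ) < m / 2)
  have hG := Gamma_pos_of_pos (by linarith : (0 : ℝ) < m / 2 + 1/2)
  unfold normalizedGammaRatio
  rw [show (m : ℝ) / 2 - m / 2 + 1/2 = 1/2 by ring, sqrt_lt' (by positivity), div_pow, mul_pow,
    mul_pow, ← sqrt_eq_rpow, ← exp_nat_mul, sq_sqrt (by positivity),
    lt_div_iff₀ (by positivity)]
  calc 2 * exp (5/6) / 3 * (Gamma ((m : ℝ) / 2) ^ 2 * (m / 2))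
      = exp (5/6) * (2/3 * ((m : ℝ) / 2) * Gamma ((m : ℝ) / 2) ^ 2) := by ring
    _ < exp (((2 : ℕ) : ℝ) * (1/2)) * (2/3 * ((m : ℝ) / 2) * Gamma ((m : ℝ) / 2) ^ 2) := by
        gcongr
        norm_num
    _ ≤ exp (((2 : ℕ) : ℝ) * (1/2)) * Gamma ((m : ℝ) / 2 + 1/2) ^ 2 := by
        gcongr
        exact two_thirds_mul_Gamma_half_sq_le m hm
    _ = Gamma ((m : ℝ) / 2 + 1/2) ^ 2 * exp (((2 : ℕ) : ℝ) * (1/2)) := by ring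

theorem gamma_ratio_lower (m n : ℕ) (hm : 2 ≤ m) (hmn : m ≤ n) :
    Real.Gamma (((n : ℝ) + 1) / 2) /
        (Real.Gamma ((m : ℝ) / 2) * ((n : ℝ) / 2) ^ (((n : ℝ) - m + 1) / 2)) >
      Real.sqrt (2 * Real.exp (5/6) / 3) * Real.exp (-(((n : ℝ) - m + 1) / 2)) := by
  have key : √(2 * exp (5/6) / 3) < normalizedGammaRatio (m / 2) (n / 2) := by
    induction n, hmn using Nat.le_induction with
    | base => exact sqrt_lt_normalizedGammaRatio_self m hm
    | succ n hmn ih =>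
      have hm2 : (2 : ℝ) ≤ m := by exact_mod_cast hm
      have hmn : (m : ℝ) ≤ n := by exact_mod_cast hmn
      calc √(2 * exp (5/6) / 3) < normalizedGammaRatio (m / 2) (n / 2) := ih
        _ ≤ normalizedGammaRatio (m / 2) (n / 2 + 1/2) :=
          normalizedGammaRatio_le_add_half (by linarith) (by linarith) (by linarith)
        _ = normalizedGammaRatio (m / 2) ((n + 1 : ℕ) / 2) := by push_cast; ring_nf
  unfold normalizedGammaRatio at key
  rw [show (n : ℝ) / 2 - m / 2 + 1/2 = ((n : ℝ) - m + 1) / 2 by ring,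
    show (n : ℝ) / 2 + 1/2 = ((n : ℝ) + 1) / 2 by ring, mul_div_right_comm (Gamma _)] at key
  rwa [gt_iff_lt, ← lt_div_iff₀ (exp_pos _), exp_neg, div_inv_eq_mul]
end

section
/- For all real a > 0 and integer b ≥ 1, the function f(t) = ∫₀ᵗ e^{−a x} x^b dx − e^{−a t} t^{b+1} is decreasing on [0, b/a] and increasing on [b/a, ∞), with f(0) = 0 and lim_{t→∞} f(t) = Γ(b+1)/a^{b+1} > 0. -/
/-!
With `F t = ∫₀ᵗ e^{-ax} xᵇ dx - e^{-at} t^{b+1}`, the derivative of the integral cancels the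
`(b+1)`-term of the derivative of `e^{-at} t^{b+1}` up to one copy of `e^{-at} tᵇ`, leaving
`F' t = e^{-at} tᵇ (a t - b)`, whose sign changes exactly at `t = b / a`. As `t → ∞` the
boundary term vanishes and the integral tends to the Gamma integral
`∫₀^∞ e^{-ax} xᵇ dx = Γ(b+1) / a^{b+1}`.
-/

open Filter Topology MeasureTheory Set Real

noncomputable def gammaGap (a : ℝ) (b : ℕ) (t : ℝ) : ℝ :=
  (∫ x in (0 : ℝ)..t, exp (-a * x) * x ^ b) - exp (-a * t) * t ^ (b + 1)

theorem setIntegral_Icc_sub_eq_gammaGap (a : ℝ) (b : ℕ) {t : ℝ} (ht : 0 ≤ t) :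
    (∫ x in Icc 0 t, exp (-a * x) * x ^ b) - exp (-a * t) * t ^ (b + 1) = gammaGap a b t := by
  rw [gammaGap, integral_Icc_eq_integral_Ioc, intervalIntegral.integral_of_le ht]

theorem hasDerivAt_gammaGap (a : ℝ) (b : ℕ) (t : ℝ) :
    HasDerivAt (gammaGap a b) (exp (-a * t) * t ^ b * (a * t - b)) t := by
  have hcont : Continuous fun x : ℝ => exp (-a * x) * x ^ b := by fun_prop
  have hint : HasDerivAt (fun t => ∫ x in (0 : ℝ)..t, exp (-a * x) * x ^ b)
      (exp (-a * t) * t ^ b) t :=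
    intervalIntegral.integral_hasDerivAt_right (hcont.intervalIntegrable 0 t)
      (hcont.stronglyMeasurableAtFilter _ _) hcont.continuousAt
  have hexp : HasDerivAt (fun t => exp (-a * t)) (exp (-a * t) * -a) t := by
    simpa using ((hasDerivAt_id t).const_mul (-a)).exp
  have hpow : HasDerivAt (fun t : ℝ => t ^ (b + 1)) ((b + 1 : ℕ) * t ^ b) t := by
    simpa using hasDerivAt_pow (b + 1) t
  refine (hint.sub (hexp.mul hpow)).congr_deriv ?_
  push_cast
  ring

theorem differentiable_gammaGap (a : ℝ) (b : ℕ) : Differentiable ℝ (gammaGap a b) :=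
  fun t => (hasDerivAt_gammaGap a b t).differentiableAt

theorem antitoneOn_gammaGap {a : ℝ} (ha : 0 < a) (b : ℕ) :
    AntitoneOn (gammaGap a b) (Icc 0 (b / a)) := by
  refine antitoneOn_of_deriv_nonpos (convex_Icc _ _)
    (differentiable_gammaGap a b).continuous.continuousOn
    (differentiable_gammaGap a b).differentiableOn fun t ht => ?_
  rw [interior_Icc] at ht
  rw [(hasDerivAt_gammaGap a b t).deriv]
  have hat : a * t ≤ b := (le_div_iff₀' ha).mp ht.2.le
  exact mul_nonpos_of_nonneg_of_nonpos (by positivity [ht.1.le]) (by linarith)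

theorem monotoneOn_gammaGap {a : ℝ} (ha : 0 < a) (b : ℕ) :
    MonotoneOn (gammaGap a b) (Ici (b / a)) := by
  refine monotoneOn_of_deriv_nonneg (convex_Ici _)
    (differentiable_gammaGap a b).continuous.continuousOn
    (differentiable_gammaGap a b).differentiableOn fun t ht => ?_
  rw [interior_Ici] at ht
  rw [(hasDerivAt_gammaGap a b t).deriv]
  have ht₀ : 0 < t := (div_nonneg b.cast_nonneg ha.le).trans_lt ht
  have hat : b ≤ a * t := (div_le_iff₀' ha).mp ht.le
  exact mul_nonneg (by positivity) (by linarith)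

theorem integral_exp_neg_mul_mul_pow_Ioi {a : ℝ} (ha : 0 < a) (b : ℕ) :
    ∫ x in Ioi 0, exp (-a * x) * x ^ b = Gamma (b + 1) / a ^ (b + 1) := by
  rw [div_eq_inv_mul, inv_eq_one_div, ← one_div_pow, ← rpow_natCast, Nat.cast_succ,
    ← integral_rpow_mul_exp_neg_mul_Ioi (by positivity) ha]
  refine setIntegral_congr_fun measurableSet_Ioi fun x _ => ?_
  rw [add_sub_cancel_right, rpow_natCast, neg_mul, mul_comm]

theorem integrableOn_exp_neg_mul_mul_pow_Ioi {a : ℝ} (ha : 0 < a) (b : ℕ) :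
    IntegrableOn (fun x => exp (-a * x) * x ^ b) (Ioi 0) := by
  refine (integrableOn_rpow_mul_exp_neg_mul_rpow (s := b)
    (neg_one_lt_zero.trans_le b.cast_nonneg) one_pos ha).congr_fun (fun x _ => ?_) measurableSet_Ioi
  dsimp only
  rw [rpow_one, rpow_natCast, mul_comm]

theorem tendsto_exp_neg_mul_mul_pow_atTop {a : ℝ} (ha : 0 < a) (n : ℕ) :
    Tendsto (fun t => exp (-a * t) * t ^ n) atTop (𝓝 0) :=
  (tendsto_rpow_mul_exp_neg_mul_atTop_nhds_zero n a ha).congr fun t => by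
    rw [rpow_natCast, mul_comm]

theorem tendsto_gammaGap_atTop {a : ℝ} (ha : 0 < a) (b : ℕ) :
    Tendsto (gammaGap a b) atTop (𝓝 (Gamma (b + 1) / a ^ (b + 1))) := by
  have hint := intervalIntegral_tendsto_integral_Ioi 0
    (integrableOn_exp_neg_mul_mul_pow_Ioi ha b) tendsto_id
  rw [integral_exp_neg_mul_mul_pow_Ioi ha b] at hint
  have := hint.sub (tendsto_exp_neg_mul_mul_pow_atTop ha (b + 1))
  rw [sub_zero] at this
  exact this

theorem f_monotonicity_general (a : ℝ) (ha : 0 < a) (b : ℕ) :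
    AntitoneOn (fun t : ℝ =>
        (∫ x in Set.Icc (0:ℝ) t, Real.exp (-a * x) * x ^ b) -
          Real.exp (-a * t) * t ^ (b + 1)) (Set.Icc 0 (b / a)) ∧
    MonotoneOn (fun t : ℝ =>
        (∫ x in Set.Icc (0:ℝ) t, Real.exp (-a * x) * x ^ b) -
          Real.exp (-a * t) * t ^ (b + 1)) (Set.Ici ((b : ℝ) / a)) ∧
    ((∫ x in Set.Icc (0:ℝ) (0:ℝ), Real.exp (-a * x) * x ^ b) -
        Real.exp (-a * 0) * (0:ℝ) ^ (b + 1) = 0) ∧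
    Tendsto (fun t : ℝ =>
        (∫ x in Set.Icc (0:ℝ) t, Real.exp (-a * x) * x ^ b) -
          Real.exp (-a * t) * t ^ (b + 1)) atTop
      (𝓝 (Real.Gamma ((b : ℝ) + 1) / a ^ (b + 1))) ∧
    0 < Real.Gamma ((b : ℝ) + 1) / a ^ (b + 1) := by
  have hba : (0 : ℝ) ≤ b / a := by positivity
  have heq : EqOn (fun t => (∫ x in Icc 0 t, exp (-a * x) * x ^ b) - exp (-a * t) * t ^ (b + 1))
      (gammaGap a b) (Ici 0) := fun t ht => setIntegral_Icc_sub_eq_gammaGap a b ht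
  refine ⟨?_, ?_, by simp, ?_, by positivity⟩
  · exact (antitoneOn_gammaGap ha b).congr (heq.symm.mono Icc_subset_Ici_self)
  · exact (monotoneOn_gammaGap ha b).congr (heq.symm.mono (Ici_subset_Ici.mpr hba))
  · exact (tendsto_gammaGap_atTop ha b).congr'
      ((eventually_ge_atTop 0).mono fun t ht => (heq ht).symm)

theorem f_monotonicity (a : ℝ) (ha : 0 < a) (b : ℕ) (hb : 1 ≤ b) :
    AntitoneOn (fun t : ℝ =>
        (∫ x in Set.Icc (0:ℝ) t, Real.exp (-a * x) * x ^ b) -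
          Real.exp (-a * t) * t ^ (b + 1)) (Set.Icc 0 (b / a)) ∧
    MonotoneOn (fun t : ℝ =>
        (∫ x in Set.Icc (0:ℝ) t, Real.exp (-a * x) * x ^ b) -
          Real.exp (-a * t) * t ^ (b + 1)) (Set.Ici ((b : ℝ) / a)) ∧
    ((∫ x in Set.Icc (0:ℝ) (0:ℝ), Real.exp (-a * x) * x ^ b) -
        Real.exp (-a * 0) * (0:ℝ) ^ (b + 1) = 0) ∧
    Tendsto (fun t : ℝ =>
        (∫ x in Set.Icc (0:ℝ) t, Real.exp (-a * x) * x ^ b) -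
          Real.exp (-a * t) * t ^ (b + 1)) atTop
      (𝓝 (Real.Gamma ((b : ℝ) + 1) / a ^ (b + 1))) ∧
    0 < Real.Gamma ((b : ℝ) + 1) / a ^ (b + 1) :=
  f_monotonicity_general a ha b
end
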